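/- arXiv:1701.07345 — 2 statements merged into one kernel-verified Lean document; each statement's English description precedes it below -/
import Mathlib

section
/- Let m ≥ 1, let ν > 0, let (a_{ij}) be a real symmetric m × m matrix with a_{ij} > 0 for all i, j such that the matrix (a_{ij}²) is conditionally negative definite, and let (σ_{ij}) be a real symmetric m × m matrix such that the matrix with entries σ_{ij} a_{ij}^{2ν} is positive semidefinite. Then for every λ ≥ 0, the m × m matrix with entries σ_{ij} a_{ij}^{2ν} (a_{ij}² + λ²)^{−(ν + 3/2)} is positive semidefinite. -/
/-!
Schoenberg: if `Θ` is symmetric and conditionally negative definite, then `(exp (-t Θᵢⱼ))` is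
positive semidefinite for every `t ≥ 0`. Pinning `Θ` at a base point `z` gives a positive
semidefinite `Bᵢⱼ = Θᵢz + Θzⱼ - Θᵢⱼ - Θzz` with `exp (-t Θᵢⱼ) = exp (t Θzz) uᵢ uⱼ exp (t Bᵢⱼ)`, and
entrywise exponentials of positive semidefinite matrices are positive semidefinite by the Schur
product theorem. Since `(aᵢⱼ² + λ²)` is again conditionally negative definite, the Gamma integral
`x ^ (-s) = Γ(s)⁻¹ ∫₀^∞ t ^ (s - 1) exp (-t x) dt` exhibits `((aᵢⱼ² + λ²) ^ (-(ν + 3/2)))` as a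
nonnegative mixture of such matrices; one more Schur product with `(σᵢⱼ aᵢⱼ ^ (2ν))` concludes.
-/

open Matrix Real

/-- A symmetric real matrix `Θ` is conditionally negative definite if
`∑_{i,j} c_i c_j Θ_{ij} ≤ 0` whenever `∑_i c_i = 0`. -/
def CondNegDef {m : ℕ} (Θ : Matrix (Fin m) (Fin m) ℝ) : Prop :=
  ∀ c : Fin m → ℝ, (∑ i, c i) = 0 → (∑ i, ∑ j, c i * c j * Θ i j) ≤ 0

open MeasureTheory Set

namespace Matrix

variable {ι : Type*} [Fintype ι]

lemma dotProduct_mulVec_self_eq_sum (A : Matrix ι ι ℝ) (x : ι → ℝ) :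
    x ⬝ᵥ A *ᵥ x = ∑ i, ∑ j, x i * x j * A i j := by
  simp only [dotProduct, mulVec, Finset.mul_sum]
  exact Finset.sum_congr rfl fun i _ => Finset.sum_congr rfl fun j _ => by ring

lemma posSemidef_tsum {β : Type*} {K : β → Matrix ι ι ℝ} (hK : ∀ n, (K n).PosSemidef)
    (hK_sum : ∀ i j, Summable fun n => K n i j) :
    (of fun i j => ∑' n, K n i j).PosSemidef := by
  refine .of_dotProduct_mulVec_nonneg ?_ fun x => ?_
  · ext i j
    simp only [conjTranspose_apply, of_apply, star_trivial]
    exact tsum_congr fun n => (hK n).isHermitian.apply i j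
  have hterm i j : Summable fun n => x i * x j * K n i j := (hK_sum i j).mul_left _
  have hquad : star x ⬝ᵥ (of fun i j => ∑' n, K n i j) *ᵥ x = ∑' n, x ⬝ᵥ K n *ᵥ x := by
    simp only [star_trivial, dotProduct_mulVec_self_eq_sum, of_apply, ← tsum_mul_left]
    rw [Summable.tsum_finsetSum fun i _ => summable_sum fun j _ => hterm i j]
    simp only [Summable.tsum_finsetSum fun j _ => hterm _ j]
  rw [hquad]
  exact tsum_nonneg fun n => by simpa using (hK n).dotProduct_mulVec_nonneg x

lemma posSemidef_integral {α : Type*} [MeasurableSpace α] {μ : Measure α}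
    {K : α → Matrix ι ι ℝ} (hK : ∀ᵐ t ∂μ, (K t).PosSemidef)
    (hK_int : ∀ i j, Integrable (fun t => K t i j) μ) :
    (of fun i j => ∫ t, K t i j ∂μ).PosSemidef := by
  refine .of_dotProduct_mulVec_nonneg ?_ fun x => ?_
  · ext i j
    simp only [conjTranspose_apply, of_apply, star_trivial]
    exact integral_congr_ae (hK.mono fun t ht => ht.isHermitian.apply i j)
  have hterm i j : Integrable (fun t => x i * x j * K t i j) μ := (hK_int i j).const_mul _
  have hquad : star x ⬝ᵥ (of fun i j => ∫ t, K t i j ∂μ) *ᵥ x = ∫ t, x ⬝ᵥ K t *ᵥ x ∂μ := by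
    simp only [star_trivial, dotProduct_mulVec_self_eq_sum, of_apply, ← integral_const_mul]
    rw [integral_finsetSum _ fun i _ => integrable_finsetSum _ fun j _ => hterm i j]
    simp only [integral_finsetSum _ fun j _ => hterm _ j]
  rw [hquad]
  exact integral_nonneg_of_ae (hK.mono fun t ht => by simpa using ht.dotProduct_mulVec_nonneg x)

lemma PosSemidef.map_pow {B : Matrix ι ι ℝ} (hB : B.PosSemidef) (n : ℕ) :
    (B.map (· ^ n)).PosSemidef := by
  induction n with
  | zero =>
    convert posSemidef_vecMulVec_self_star (1 : ι → ℝ) using 1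
    ext i j
    simp [vecMulVec_apply]
  | succ n ih =>
    have hsucc : B.map (· ^ (n + 1)) = B.map (· ^ n) ⊙ B := by ext; simp [pow_succ]
    exact hsucc ▸ ih.hadamard hB

lemma PosSemidef.map_exp {B : Matrix ι ι ℝ} (hB : B.PosSemidef) :
    (B.map Real.exp).PosSemidef := by
  have hK n : ((n.factorial : ℝ)⁻¹ • B.map (· ^ n)).PosSemidef :=
    (hB.map_pow n).smul (by positivity)
  convert posSemidef_tsum hK fun i j => by
    simpa [div_eq_inv_mul] using Real.summable_pow_div_factorial (B i j) using 1
  ext i j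
  simp [Real.exp_eq_exp_ℝ, NormedSpace.exp_eq_tsum_div, div_eq_inv_mul]

end Matrix

namespace Real

lemma rpow_neg_eq_integral {x s : ℝ} (hx : 0 < x) (hs : 0 < s) :
    x ^ (-s) = ∫ t in Ioi 0, (Gamma s)⁻¹ * t ^ (s - 1) * exp (-(t * x)) := by
  simp only [mul_assoc, integral_const_mul, mul_comm _ x, integral_rpow_mul_exp_neg_mul_Ioi hs hx]
  rw [one_div, inv_rpow hx.le, rpow_neg hx.le]
  field_simp [(Gamma_pos_of_pos hs).ne']

lemma integrableOn_rpow_mul_exp_neg_mul {x s : ℝ} (hx : 0 < x) (hs : 0 < s) :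
    IntegrableOn (fun t => t ^ (s - 1) * exp (-(t * x))) (Ioi 0) := by
  simpa [mul_comm] using
    integrableOn_rpow_mul_exp_neg_mul_rpow (by linarith : -1 < s - 1) one_pos hx

end Real

namespace CondNegDef

variable {m : ℕ} {Θ : Matrix (Fin m) (Fin m) ℝ}

lemma add_const (hΘ : CondNegDef Θ) (r : ℝ) : CondNegDef (of fun i j => Θ i j + r) := by
  intro c hc
  have hsplit : ∑ i, ∑ j, c i * c j * (Θ i j + r) =
      ∑ i, ∑ j, c i * c j * Θ i j + r * (∑ i, c i) ^ 2 := by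
    rw [sq, Finset.sum_mul_sum, Finset.mul_sum]
    simp only [Finset.mul_sum, ← Finset.sum_add_distrib]
    exact Finset.sum_congr rfl fun i _ => Finset.sum_congr rfl fun j _ => by ring
  simpa [hsplit, hc] using hΘ c hc

lemma posSemidef_basepoint (hsym : Θ.IsSymm) (hΘ : CondNegDef Θ) (z : Fin m) :
    (of fun i j => Θ i z + Θ z j - Θ i j - Θ z z).PosSemidef := by
  refine .of_dotProduct_mulVec_nonneg ?_ fun d => ?_
  · ext i j
    simp only [conjTranspose_apply, of_apply, hsym.apply z j, hsym.apply i z, hsym.apply i j,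
      star_trivial, sub_left_inj]
    ring
  set e : Fin m → ℝ := d - (∑ i, d i) • Pi.single z 1 with he
  have he_sum : ∑ i, e i = 0 := by simp [he, Finset.sum_sub_distrib, Pi.single_apply]
  have hquad : star d ⬝ᵥ (of fun i j => Θ i z + Θ z j - Θ i j - Θ z z) *ᵥ d =
      -∑ i, ∑ j, e i * e j * Θ i j := by
    simp only [star_trivial, dotProduct_mulVec_self_eq_sum, of_apply, he, Pi.sub_apply,
      Pi.smul_apply, smul_eq_mul, mul_sub, mul_add, Finset.sum_sub_distrib,
      Finset.sum_add_distrib, Pi.single_apply, mul_ite, mul_one, mul_zero, sub_mul, ite_mul,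
      Finset.sum_mul, zero_mul, Finset.mul_sum, Finset.sum_ite_irrel, Finset.sum_const_zero,
      Finset.sum_ite_eq', Finset.mem_univ, ↓reduceIte, neg_sub]
    rw [Finset.sum_comm (f := fun x y => d y * d x * Θ z x)]
    ring_nf
    simp only [mul_comm, mul_left_comm]
  linarith [hΘ e he_sum]

lemma posSemidef_exp_neg_mul (hsym : Θ.IsSymm) (hΘ : CondNegDef Θ) {t : ℝ} (ht : 0 ≤ t) :
    (of fun i j => exp (-(t * Θ i j))).PosSemidef := by
  rcases isEmpty_or_nonempty (Fin m) with _ | ⟨⟨z⟩⟩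
  · exact .of_dotProduct_mulVec_nonneg (Subsingleton.elim _ _) fun x => by simp
  set u : Fin m → ℝ := fun i => exp (-(t * Θ i z))
  have hu : (exp (t * Θ z z) • vecMulVec u (star u)).PosSemidef :=
    (posSemidef_vecMulVec_self_star u).smul (exp_pos _).le
  have hB := ((hΘ.posSemidef_basepoint hsym z).smul ht).map_exp
  have hfactor : (of fun i j => exp (-(t * Θ i j))) = (exp (t * Θ z z) • vecMulVec u (star u)) ⊙
      (t • of fun i j => Θ i z + Θ z j - Θ i j - Θ z z).map exp := by
    ext i j
    simp only [of_apply, hadamard_apply, Matrix.smul_apply, map_apply, vecMulVec_apply,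
      star_trivial, smul_eq_mul, u, ← exp_add, hsym.apply z j]
    congr 1
    ring
  exact hfactor ▸ hu.hadamard hB

lemma posSemidef_rpow_neg (hsym : Θ.IsSymm) (hΘ : CondNegDef Θ) (hpos : ∀ i j, 0 < Θ i j)
    {s : ℝ} (hs : 0 < s) : (of fun i j => Θ i j ^ (-s)).PosSemidef := by
  have hK : ∀ᵐ t ∂(volume.restrict (Ioi (0 : ℝ))),
      ((Gamma s)⁻¹ * t ^ (s - 1)) • (of fun i j => exp (-(t * Θ i j))) |>.PosSemidef :=
    ae_restrict_of_forall_mem measurableSet_Ioi fun t ht =>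
      (hΘ.posSemidef_exp_neg_mul hsym (le_of_lt ht)).smul
        (mul_nonneg (inv_nonneg.2 (Gamma_pos_of_pos hs).le) (rpow_nonneg (le_of_lt ht) _))
  convert posSemidef_integral hK fun i j => by
    simpa [mul_assoc] using
      (integrableOn_rpow_mul_exp_neg_mul (hpos i j) hs).const_mul (Gamma s)⁻¹ using 1
  ext i j
  simp [rpow_neg_eq_integral (hpos i j) hs, mul_assoc]

end CondNegDef

theorem flexible_matern_valid_A2a_general
    (m : ℕ) (ν : ℝ) (hν : 0 < ν)
    (a : Matrix (Fin m) (Fin m) ℝ) (hasym : a.IsSymm) (hapos : ∀ i j, 0 < a i j)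
    (hacnd : CondNegDef (Matrix.of (fun i j => a i j ^ 2 : Matrix (Fin m) (Fin m) ℝ)))
    (σ : Matrix (Fin m) (Fin m) ℝ)
    (hσ : (Matrix.of (fun i j => σ i j * a i j ^ (2 * ν) :
      Matrix (Fin m) (Fin m) ℝ)).PosSemidef) :
    ∀ l : ℝ, 0 ≤ l →
      (Matrix.of (fun i j =>
        σ i j * a i j ^ (2 * ν) * (a i j ^ 2 + l ^ 2) ^ (-(ν + 3/2)) :
        Matrix (Fin m) (Fin m) ℝ)).PosSemidef := by
  intro l _
  have hsym : (of fun i j => a i j ^ 2 + l ^ 2).IsSymm := by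
    ext i j
    simp [hasym.apply i j]
  have hpos i j : 0 < (of fun i j => a i j ^ 2 + l ^ 2) i j := by
    have := hapos i j
    simp only [of_apply]
    positivity
  have hK := (hacnd.add_const (l ^ 2)).posSemidef_rpow_neg hsym hpos (by linarith : 0 < ν + 3 / 2)
  have hprod : (of fun i j => σ i j * a i j ^ (2 * ν) * (a i j ^ 2 + l ^ 2) ^ (-(ν + 3 / 2))) =
      (of fun i j => σ i j * a i j ^ (2 * ν)) ⊙
        of fun i j => (a i j ^ 2 + l ^ 2) ^ (-(ν + 3 / 2)) := by
    ext i j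
    simp
  exact hprod ▸ hσ.hadamard hK

/-- Validity condition A2(a) for the flexible multivariate Matérn
model with common smoothness `ν`: if `(a_{ij}²)` is conditionally negative
definite and `(σ_{ij} a_{ij}^{2ν})` is positive semidefinite, then the matrix of
Matérn spectral densities is positive semidefinite at every `λ ≥ 0`. -/
theorem flexible_matern_valid_A2a
    (m : ℕ) (hm : 1 ≤ m) (ν : ℝ) (hν : 0 < ν)
    (a : Matrix (Fin m) (Fin m) ℝ) (hasym : a.IsSymm) (hapos : ∀ i j, 0 < a i j)
    (hacnd : CondNegDef (Matrix.of (fun i j => a i j ^ 2 : Matrix (Fin m) (Fin m) ℝ)))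
    (σ : Matrix (Fin m) (Fin m) ℝ) (hσsym : σ.IsSymm)
    (hσ : (Matrix.of (fun i j => σ i j * a i j ^ (2 * ν) :
      Matrix (Fin m) (Fin m) ℝ)).PosSemidef) :
    ∀ l : ℝ, 0 ≤ l →
      (Matrix.of (fun i j =>
        σ i j * a i j ^ (2 * ν) * (a i j ^ 2 + l ^ 2) ^ (-(ν + 3/2)) :
        Matrix (Fin m) (Fin m) ℝ)).PosSemidef :=
  flexible_matern_valid_A2a_general m ν hν a hasym hapos hacnd σ hσ
end

section
/- Let m ≥ 1, let ν_1,…,ν_m > 0 and a_1,…,a_m > 0, and set ν_{ij} = (ν_i + ν_j)/2 and a_{ij} = ((a_i² + a_j²)/2)^{1/2}. Let (σ_{ij}) be a real symmetric m × m matrix such that the matrix with entries σ_{ij} a_{ij}^{2ν_{ij}} / Γ(ν_{ij}) is positive semidefinite. Then for every λ ≥ 0, the m × m matrix with entries σ_{ij} a_{ij}^{2ν_{ij}} Γ(ν_{ij} + 3/2)/Γ(ν_{ij}) · (a_{ij}² + λ²)^{−(ν_{ij} + 3/2)} is positive semidefinite. -/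
/-!
The matrix is the Hadamard product of the assumed positive semidefinite matrix with
`K i j = Γ(ν_{ij} + 3/2) (a_{ij}² + λ²)^{-(ν_{ij} + 3/2)}`, so by the Schur product theorem it
suffices that `K` is positive semidefinite. Both `ν_{ij} + 3/2` and `a_{ij}² + λ²` are midpoints
`(sᵢ + sⱼ)/2`, `(rᵢ + rⱼ)/2` of marginal values, so `Γ(s) r^{-s} = ∫₀^∞ u^{s-1} e^{-ru} du`
exhibits `K` as the Gram matrix of the functions `u ↦ u^{(sᵢ-1)/2} e^{-rᵢu/2}` in `L²(0, ∞)`.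
-/

open Matrix Real MeasureTheory Set

theorem Matrix.posSemidef_integral_mul {ι α : Type*} [Finite ι] [MeasurableSpace α]
    {μ : Measure α} {g : ι → α → ℝ} (hg : ∀ i, MemLp (g i) 2 μ) :
    (of fun i j => ∫ x, g i x * g j x ∂μ).PosSemidef := by
  have hgram : PosSemidef (gram ℝ fun i => (hg i).toLp (g i)) := posSemidef_gram ℝ _
  convert hgram using 1
  ext i j
  rw [gram_apply, L2.inner_def, of_apply]
  refine integral_congr_ae ?_
  filter_upwards [(hg i).coeFn_toLp, (hg j).coeFn_toLp] with x hi hj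
  simp [hi, hj, mul_comm]

theorem Real.integrableOn_rpow_mul_exp_neg_mul_Ioi {s r : ℝ} (hs : 0 < s) (hr : 0 < r) :
    IntegrableOn (fun u : ℝ => u ^ (s - 1) * exp (-(r * u))) (Ioi 0) := by
  simpa [neg_mul] using
    integrableOn_rpow_mul_exp_neg_mul_rpow (p := 1) (by linarith : -1 < s - 1) one_pos hr

theorem Matrix.posSemidef_gamma_mul_rpow_neg_midpoint {ι : Type*} [Finite ι] {s r : ι → ℝ}
    (hs : ∀ i, 0 < s i) (hr : ∀ i, 0 < r i) :
    (of fun i j =>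
      Gamma ((s i + s j) / 2) * ((r i + r j) / 2) ^ (-((s i + s j) / 2))).PosSemidef := by
  set φ : ι → ℝ → ℝ := fun i u => u ^ ((s i - 1) / 2) * exp (-(r i / 2 * u))
  have hφ_mul : ∀ i j, EqOn (fun u => φ i u * φ j u)
      (fun u => u ^ ((s i + s j) / 2 - 1) * exp (-((r i + r j) / 2 * u))) (Ioi 0) :=
    fun i j u hu => by
      simp only [φ]
      rw [mul_mul_mul_comm, ← rpow_add hu, ← exp_add]
      ring_nf
  have hs_mid : ∀ i j, 0 < (s i + s j) / 2 := fun i j => by linarith [hs i, hs j]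
  have hr_mid : ∀ i j, 0 < (r i + r j) / 2 := fun i j => by linarith [hr i, hr j]
  have hφ : ∀ i, MemLp (φ i) 2 (volume.restrict (Ioi 0)) := fun i =>
    (memLp_two_iff_integrable_sq (by fun_prop)).2 <|
      (integrableOn_rpow_mul_exp_neg_mul_Ioi (hs_mid i i) (hr_mid i i)).congr_fun
        (fun u hu => (hφ_mul i i hu).symm.trans (sq _).symm) measurableSet_Ioi
  convert posSemidef_integral_mul hφ using 1
  ext i j
  rw [of_apply, of_apply, setIntegral_congr_fun measurableSet_Ioi (hφ_mul i j),
    integral_rpow_mul_exp_neg_mul_Ioi (hs_mid i j) (hr_mid i j), one_div,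
    inv_rpow (hr_mid i j).le, ← rpow_neg (hr_mid i j).le, mul_comm]

theorem flexible_matern_valid_A3a_general
    (m : ℕ)
    (ν a : Fin m → ℝ) (hν : ∀ i, 0 < ν i) (ha : ∀ i, 0 < a i)
    (νm am : Fin m → Fin m → ℝ)
    (hνm : ∀ i j, νm i j = (ν i + ν j) / 2)
    (ham : ∀ i j, am i j = Real.sqrt ((a i ^ 2 + a j ^ 2) / 2))
    (σ : Matrix (Fin m) (Fin m) ℝ)
    (hσ : (Matrix.of (fun i j =>
      σ i j * am i j ^ (2 * νm i j) / Real.Gamma (νm i j) :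
      Matrix (Fin m) (Fin m) ℝ)).PosSemidef) :
    ∀ l : ℝ, 0 ≤ l →
      (Matrix.of (fun i j =>
        σ i j * am i j ^ (2 * νm i j) * Real.Gamma (νm i j + 3/2) /
          Real.Gamma (νm i j) * (am i j ^ 2 + l ^ 2) ^ (-(νm i j + 3/2)) :
        Matrix (Fin m) (Fin m) ℝ)).PosSemidef := by
  intro l _
  have hK := posSemidef_gamma_mul_rpow_neg_midpoint (s := fun i => ν i + 3 / 2)
    (r := fun i => a i ^ 2 + l ^ 2) (fun i => by linarith [hν i])
    (fun i => by have := ha i; positivity)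
  have hs_mid : ∀ i j, (ν i + 3 / 2 + (ν j + 3 / 2)) / 2 = νm i j + 3 / 2 := fun i j => by
    rw [hνm]; ring
  have hr_mid : ∀ i j, (a i ^ 2 + l ^ 2 + (a j ^ 2 + l ^ 2)) / 2 = am i j ^ 2 + l ^ 2 :=
    fun i j => by rw [ham, sq_sqrt (by positivity)]; ring
  have hschur : PosSemidef (_ ⊙ _ : Matrix (Fin m) (Fin m) ℝ) := hσ.hadamard hK
  convert hschur using 1
  ext i j
  simp only [hadamard_apply, of_apply, hs_mid, hr_mid]
  ring

/-- Validity condition A3(a), the parsimonious case of the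
flexible multivariate Matérn model: with `ν_{ij} = (ν_i + ν_j)/2` and
`a_{ij} = ((a_i² + a_j²)/2)^{1/2}`, if `(σ_{ij} a_{ij}^{2ν_{ij}}/Γ(ν_{ij}))` is
positive semidefinite then the matrix of Matérn spectral densities is positive
semidefinite at every `λ ≥ 0`. -/
theorem flexible_matern_valid_A3a
    (m : ℕ) (hm : 1 ≤ m)
    (ν a : Fin m → ℝ) (hν : ∀ i, 0 < ν i) (ha : ∀ i, 0 < a i)
    (νm am : Fin m → Fin m → ℝ)
    (hνm : ∀ i j, νm i j = (ν i + ν j) / 2)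
    (ham : ∀ i j, am i j = Real.sqrt ((a i ^ 2 + a j ^ 2) / 2))
    (σ : Matrix (Fin m) (Fin m) ℝ) (hσsym : σ.IsSymm)
    (hσ : (Matrix.of (fun i j =>
      σ i j * am i j ^ (2 * νm i j) / Real.Gamma (νm i j) :
      Matrix (Fin m) (Fin m) ℝ)).PosSemidef) :
    ∀ l : ℝ, 0 ≤ l →
      (Matrix.of (fun i j =>
        σ i j * am i j ^ (2 * νm i j) * Real.Gamma (νm i j + 3/2) /
          Real.Gamma (νm i j) * (am i j ^ 2 + l ^ 2) ^ (-(νm i j + 3/2)) :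
        Matrix (Fin m) (Fin m) ℝ)).PosSemidef :=
  flexible_matern_valid_A3a_general m ν a hν ha νm am hνm ham σ hσ
end
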